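/- arXiv:1905.01693 — 10 statements merged into one kernel-verified Lean document; each statement's English description precedes it below -/
import Mathlib

section
/- For every finite undirected graph G and every capacity function κ: V(G) → ℕ, G has a κ-DP-subgraph; that is, there exists a spanning bipartite subgraph H of G with partite sets D and P such that every vertex i ∈ D has degree in H equal to min(κ(i), deg_G(i)), and every vertex i ∈ P has positive degree in H. -/
/-!
Strengthen the claim to the subgraph induced on an arbitrary finite set `A` and induct on `A`.
Pick a pivot `v ∈ A` and a set `S` of `min (κ v) (deg_A v)` neighbours of `v`, put `v` into `D`
with `H`-neighbourhood `S`, and recurse on `A \ ({v} ∪ S)`. A vertex `d` put into `D` there had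
its demand `min (κ d) (deg_A d)` lowered by at most its number of neighbours in `S ∪ {v}`; it
makes up the difference with neighbours in `S`, which already lie in `P`. The neighbour `v` cannot
be used that way, so every neighbour `d ∉ S` of `v` must have `κ d < deg_A d`. This holds if `v`
is chosen saturated (`0 < deg_A v ≤ κ v`, so that `S` is all of `N_A(v)`) whenever a saturated
vertex exists, and automatically otherwise.
-/

/-- `H` is a κ-DP-subgraph of `G` with partite sets `D` and `P`:
a spanning bipartite subgraph whose edges go between `D` and `P`,
with `deg_H i = min (κ i) (deg_G i)` for `i ∈ D` and positive degree on `P`. -/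
def IsDPSubgraph {V : Type*} (G : SimpleGraph V) (κ : V → ℕ)
    (H : SimpleGraph V) (D P : Set V) : Prop :=
  H ≤ G ∧ D ∪ P = Set.univ ∧ D ∩ P = ∅ ∧
  (∀ ⦃u v⦄, H.Adj u v → (u ∈ D ∧ v ∈ P) ∨ (u ∈ P ∧ v ∈ D)) ∧
  (∀ i ∈ D, (H.neighborSet i).ncard = min (κ i) ((G.neighborSet i).ncard)) ∧
  (∀ i ∈ P, 0 < (H.neighborSet i).ncard)

open Finset

lemma Finset.card_filter_le_card_filter_sdiff_add {α : Type*} [DecidableEq α] (p : α → Prop)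
    [DecidablePred p] (A T : Finset α) :
    #{w ∈ A | p w} ≤ #{w ∈ A \ T | p w} + #{w ∈ T | p w} :=
  calc #{w ∈ A | p w}
      ≤ #{w ∈ A \ T ∪ T | p w} := card_le_card (filter_subset_filter _ (by simp))
    _ ≤ #{w ∈ A \ T | p w} + #{w ∈ T | p w} := by
      rw [filter_union]; exact card_union_le _ _

namespace SimpleGraph

variable {V : Type*} {G : SimpleGraph V} [DecidableRel G.Adj]

variable (G) in
lemma exists_pivot (κ : V → ℕ) {A : Finset V} (hA : A.Nonempty) :
    ∃ v ∈ A, ∃ S ⊆ {w ∈ A | G.Adj v w}, #S = min (κ v) #{w ∈ A | G.Adj v w} ∧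
      ∀ d ∈ A, d ∉ S → G.Adj d v → κ d < #{w ∈ A | G.Adj d w} := by
  by_cases hsat : ∃ v ∈ A, 0 < #{w ∈ A | G.Adj v w} ∧ #{w ∈ A | G.Adj v w} ≤ κ v
  · obtain ⟨v, hvA, -, hle⟩ := hsat
    refine ⟨v, hvA, _, subset_rfl, (min_eq_right hle).symm, fun d hdA hdS hdv => ?_⟩
    exact absurd (mem_filter.2 ⟨hdA, hdv.symm⟩) hdS
  · push Not at hsat
    obtain ⟨v, hvA⟩ := hA
    obtain ⟨S, hS, hcard⟩ := exists_subset_card_eq (min_le_right (κ v) #{w ∈ A | G.Adj v w})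
    refine ⟨v, hvA, S, hS, hcard, fun d hdA _ hdv => hsat d hdA ?_⟩
    exact card_pos.2 ⟨v, mem_filter.2 ⟨hvA, hdv⟩⟩

variable [DecidableEq V]

lemma min_card_filter_adj_le (κ : V → ℕ) (A S : Finset V) {v d : V}
    (hspare : G.Adj d v → κ d < #{w ∈ A | G.Adj d w}) :
    min (κ d) #{w ∈ A | G.Adj d w} ≤
      min (κ d) #{w ∈ A \ insert v S | G.Adj d w} + #{w ∈ S | G.Adj d w} := by
  have hsplit := card_filter_le_card_filter_sdiff_add (G.Adj d) A (insert v S)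
  rw [filter_insert] at hsplit
  by_cases hdv : G.Adj d v
  · rw [if_pos hdv] at hsplit
    have := card_insert_le v {w ∈ S | G.Adj d w}
    have := hspare hdv
    omega
  · rw [if_neg hdv] at hsplit
    omega

variable (G) in
/-- A κ-DP-subgraph of the subgraph induced on `A`, in which each `d ∈ D` selects its
`H`-neighbourhood `f d`. -/
structure IsDPSelection (κ : V → ℕ) (A D : Finset V) (f : V → Finset V) : Prop where
  subset : D ⊆ A
  selection_subset : ∀ d ∈ D, f d ⊆ {w ∈ A \ D | G.Adj d w}
  card_selection : ∀ d ∈ D, #(f d) = min (κ d) #{w ∈ A | G.Adj d w}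
  cover : ∀ p ∈ A \ D, ∃ d ∈ D, p ∈ f d

variable {κ : V → ℕ} {A S D : Finset V} {f g : V → Finset V} {v : V}

lemma IsDPSelection.insert_update (hvA : v ∈ A) (hS : S ⊆ {w ∈ A | G.Adj v w})
    (hcard : #S = min (κ v) #{w ∈ A | G.Adj v w}) (h : G.IsDPSelection κ (A \ insert v S) D f)
    (hg : ∀ d ∈ D, g d ⊆ {w ∈ S | G.Adj d w})
    (hgcard : ∀ d ∈ D, #(g d) =
      min (κ d) #{w ∈ A | G.Adj d w} - min (κ d) #{w ∈ A \ insert v S | G.Adj d w}) :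
    G.IsDPSelection κ A (insert v D) (Function.update (fun d => f d ∪ g d) v S) := by
  have hDA : ∀ d ∈ D, d ∈ A ∧ d ≠ v ∧ d ∉ S := fun d hd => by
    simpa [not_or] using h.subset hd
  have hf : ∀ d ∈ D, ∀ w ∈ f d, w ∈ A ∧ w ≠ v ∧ w ∉ S ∧ w ∉ D ∧ G.Adj d w :=
    fun d hd w hw => by simpa [not_or, and_assoc] using h.selection_subset d hd hw
  have hS_avail : ∀ d, ∀ w ∈ S, G.Adj d w →
      w ∈ ({w ∈ A \ insert v D | G.Adj d w} : Finset V) := by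
    intro d w hw hdw
    obtain ⟨hwA, hvw⟩ := mem_filter.1 (hS hw)
    have hwD : w ∉ D := fun hwD => (hDA w hwD).2.2 hw
    simp [hwA, hvw.ne.symm, hwD, hdw]
  refine ⟨insert_subset hvA (h.subset.trans sdiff_subset), fun d hd => ?_, fun d hd => ?_,
    fun p hp => ?_⟩
  · rcases mem_insert.1 hd with rfl | hd
    · rw [Function.update_self]
      exact fun w hw => hS_avail d w hw (mem_filter.1 (hS hw)).2
    rw [Function.update_of_ne (hDA d hd).2.1]
    refine union_subset (fun w hw => ?_) (fun w hw => ?_)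
    · obtain ⟨hwA, hwv, -, hwD, hdw⟩ := hf d hd w hw
      simp [hwA, hwv, hwD, hdw]
    · obtain ⟨hwS, hdw⟩ := mem_filter.1 (hg d hd hw)
      exact hS_avail d w hwS hdw
  · rcases mem_insert.1 hd with rfl | hd
    · rw [Function.update_self, hcard]
    rw [Function.update_of_ne (hDA d hd).2.1]
    have hdisj : Disjoint (f d) (g d) := Finset.disjoint_left.2 fun _ hwf hwg =>
      (hf d hd _ hwf).2.2.1 (mem_filter.1 (hg d hd hwg)).1
    have hmono : #{w ∈ A \ insert v S | G.Adj d w} ≤ #{w ∈ A | G.Adj d w} :=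
      card_le_card (filter_subset_filter _ sdiff_subset)
    rw [card_union_of_disjoint hdisj, h.card_selection d hd, hgcard d hd]
    omega
  · by_cases hpS : p ∈ S
    · exact ⟨v, mem_insert_self v D, by rwa [Function.update_self]⟩
    obtain ⟨d, hd, hpd⟩ := h.cover p (by simp_all [not_or])
    refine ⟨d, mem_insert_of_mem hd, ?_⟩
    rw [Function.update_of_ne (hDA d hd).2.1]
    exact mem_union_left _ hpd

lemma IsDPSelection.insert_pivot (hvA : v ∈ A) (hS : S ⊆ {w ∈ A | G.Adj v w})
    (hcard : #S = min (κ v) #{w ∈ A | G.Adj v w})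
    (hspare : ∀ d ∈ A, d ∉ S → G.Adj d v → κ d < #{w ∈ A | G.Adj d w})
    (h : G.IsDPSelection κ (A \ insert v S) D f) :
    ∃ f', G.IsDPSelection κ A (insert v D) f' := by
  have htop : ∀ d ∈ D, ∃ g ⊆ {w ∈ S | G.Adj d w},
      #g = min (κ d) #{w ∈ A | G.Adj d w} - min (κ d) #{w ∈ A \ insert v S | G.Adj d w} := by
    intro d hd
    have hd' : d ∈ A ∧ d ∉ insert v S := mem_sdiff.1 (h.subset hd)
    exact exists_subset_card_eq (Nat.sub_le_iff_le_add'.2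
      (min_card_filter_adj_le κ A S (hspare d hd'.1 fun hdS => hd'.2 (mem_insert_of_mem hdS))))
  choose! g hg hgcard using htop
  exact ⟨_, h.insert_update hvA hS hcard hg hgcard⟩

variable (G) in
lemma exists_isDPSelection (κ : V → ℕ) (A : Finset V) : ∃ D f, G.IsDPSelection κ A D f := by
  induction A using Finset.strongInduction with
  | H A ih =>
  rcases A.eq_empty_or_nonempty with rfl | hA
  · exact ⟨∅, fun _ => ∅, ⟨subset_rfl, by simp, by simp, by simp⟩⟩
  obtain ⟨v, hvA, S, hS, hcard, hspare⟩ := G.exists_pivot κ hA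
  have hvS : insert v S ⊆ A := insert_subset hvA fun w hw => (mem_filter.1 (hS hw)).1
  obtain ⟨D, f, h⟩ := ih _ (sdiff_ssubset hvS (insert_nonempty v S))
  exact ⟨insert v D, h.insert_pivot hvA hS hcard hspare⟩

lemma IsDPSelection.isDPSubgraph [Fintype V] (h : G.IsDPSelection κ univ D f) :
    IsDPSubgraph G κ (fromRel fun d p => d ∈ D ∧ p ∈ f d) D (↑D)ᶜ := by
  have hf : ∀ d ∈ D, ∀ p ∈ f d, p ∉ D ∧ G.Adj d p := fun d hd p hp => by
    simpa using h.selection_subset d hd hp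
  have hnbr : ∀ i ∈ D, (fromRel fun d p => d ∈ D ∧ p ∈ f d).neighborSet i = ↑(f i) := by
    intro i hi
    ext w
    simp only [mem_neighborSet, fromRel_adj, mem_coe]
    refine ⟨?_, fun hw => ⟨G.ne_of_adj (hf i hi w hw).2, Or.inl ⟨hi, hw⟩⟩⟩
    rintro ⟨-, ⟨-, hw⟩ | ⟨hwD, hiw⟩⟩
    · exact hw
    · exact absurd hi (hf w hwD i hiw).1
  refine ⟨?_, Set.union_compl_self _, Set.inter_compl_self _, ?_, fun i hi => ?_,
    fun p hp => ?_⟩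
  · rintro u w ⟨-, ⟨hu, huw⟩ | ⟨hw, hwu⟩⟩
    · exact (hf u hu w huw).2
    · exact (hf w hw u hwu).2.symm
  · rintro u w ⟨-, ⟨hu, huw⟩ | ⟨hw, hwu⟩⟩
    · exact Or.inl ⟨hu, (hf u hu w huw).1⟩
    · exact Or.inr ⟨(hf w hw u hwu).1, hw⟩
  · have hG : G.neighborSet i = ↑({w | G.Adj i w} : Finset V) := by ext; simp
    rw [hnbr i hi, hG, Set.ncard_coe_finset, Set.ncard_coe_finset, h.card_selection i hi]
  · obtain ⟨d, hd, hpd⟩ := h.cover p (by simpa using hp)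
    exact (Set.ncard_pos (Set.toFinite _)).2
      ⟨d, by
        rw [mem_neighborSet, fromRel_adj]
        exact ⟨(G.ne_of_adj (hf d hd p hpd).2).symm, .inr ⟨hd, hpd⟩⟩⟩

end SimpleGraph

/-- Every finite graph with any capacity function has a κ-DP-subgraph. -/
theorem exists_DPSubgraph {V : Type*} [Fintype V] (G : SimpleGraph V) (κ : V → ℕ) :
    ∃ (H : SimpleGraph V) (D P : Set V), IsDPSubgraph G κ H D P := by
  classical
  obtain ⟨D, f, h⟩ := G.exists_isDPSelection κ univ
  exact ⟨_, _, _, h.isDPSubgraph⟩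
end

section
/- If a vertex i of a finite graph G satisfies deg_G(i) ≤ κ(i), G' = G − ({i} ∪ N_G(i)) is nonempty, and H' is a κ-DP-subgraph of G' with partite sets D' and P', then the graph H obtained from the disjoint union of H' and the star with center i and leaves N_G(i), by adding for every j ∈ D' with deg_{G'}(j) < κ(j) exactly min(deg_G(j), κ(j)) − deg_{G'}(j) edges of G between j and N_G(i), is a κ-DP-subgraph of G with partite sets D = D' ∪ {i} and P = P' ∪ N_G(i). -/
/-- `H` is a κ-DP-subgraph of `G` with partite sets `D`, `P` covering the vertex set `W`. -/
def IsDPSubgraphOn {V : Type*} (G : SimpleGraph V) (κ : V → ℕ)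
    (H : SimpleGraph V) (D P W : Set V) : Prop :=
  H ≤ G ∧ D ∪ P = W ∧ D ∩ P = ∅ ∧
  (∀ ⦃u v⦄, H.Adj u v → (u ∈ D ∧ v ∈ P) ∨ (u ∈ P ∧ v ∈ D)) ∧
  (∀ i ∈ D, (H.neighborSet i).ncard = min (κ i) ((G.neighborSet i).ncard)) ∧
  (∀ i ∈ P, 0 < (H.neighborSet i).ncard)

/-- Case 1 of the induction: if `deg_G i ≤ κ i`, `G'` is the subgraph induced on the
complement of `{i} ∪ N_G(i)` (nonempty), `H'` is a κ-DP-subgraph of `G'` with partite sets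
`D'`, `P'`, and `H` is obtained from the disjoint union of `H'` and the star centered at `i`
with leaves `N_G(i)` by adding, for each `j ∈ D'`, exactly
`min (deg_G j) (κ j) − deg_{G'} j` edges of `G` between `j` and `N_G(i)`,
then `H` is a κ-DP-subgraph of `G` with partite sets `D' ∪ {i}` and `P' ∪ N_G(i)`. -/
theorem dpSubgraph_extend {V : Type*} [Fintype V] (G : SimpleGraph V) (κ : V → ℕ) (i : V)
    (hi : (G.neighborSet i).ncard ≤ κ i)
    (G' : SimpleGraph V)
    (hG' : ∀ u v, G'.Adj u v ↔
      G.Adj u v ∧ u ∉ insert i (G.neighborSet i) ∧ v ∉ insert i (G.neighborSet i))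
    (hne : ((insert i (G.neighborSet i))ᶜ : Set V).Nonempty)
    (H' : SimpleGraph V) (D' P' : Set V)
    (hH' : IsDPSubgraphOn G' κ H' D' P' ((insert i (G.neighborSet i))ᶜ))
    (H : SimpleGraph V)
    (hHG : H ≤ G)
    -- `H` agrees with `H'` on the vertices of `G'`
    (hrestrict : ∀ u v, u ∉ insert i (G.neighborSet i) → v ∉ insert i (G.neighborSet i) →
      (H.Adj u v ↔ H'.Adj u v))
    -- `H` contains the star with center `i` and leaves `N_G(i)`
    (hstar : ∀ v, H.Adj i v ↔ v ∈ G.neighborSet i)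
    -- no `H`-edges within `N_G(i)`, and any `H`-edge leaving `N_G(i)` goes to `i` or into `D'`
    (honly : ∀ u v, H.Adj u v → u ∈ G.neighborSet i → v = i ∨ v ∈ D')
    -- every `j ∈ D'` gets exactly `min (deg_G j) (κ j) − deg_{G'} j` added edges to `N_G(i)`
    (hadd : ∀ j ∈ D', (H.neighborSet j ∩ G.neighborSet i).ncard
      = min ((G.neighborSet j).ncard) (κ j) - (G'.neighborSet j).ncard) :
    IsDPSubgraphOn G κ H (D' ∪ {i}) (P' ∪ G.neighborSet i) Set.univ := by
  obtain ⟨hH'G, hDP', hDPdisj', hbip', hdeg', hpos'⟩ := hH'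
  have hiN : i ∉ G.neighborSet i := fun h => G.irrefl h
  have hmem : ∀ x, x ∈ D' ∪ P' ↔ x ∉ insert i (G.neighborSet i) := by
    intro x; rw [hDP']; simp
  have hD'c : ∀ j ∈ D', j ∉ insert i (G.neighborSet i) :=
    fun j hj => (hmem j).1 (Or.inl hj)
  have hP'c : ∀ j ∈ P', j ∉ insert i (G.neighborSet i) :=
    fun j hj => (hmem j).1 (Or.inr hj)
  have hG'out : ∀ u v, G'.Adj u v → u ∉ insert i (G.neighborSet i) ∧
      v ∉ insert i (G.neighborSet i) := fun u v h => ((hG' u v).1 h).2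
  refine ⟨hHG, ?_, ?_, ?_, ?_, ?_⟩
  · ext x
    simp only [Set.mem_union, Set.mem_univ, iff_true, Set.mem_singleton_iff]
    by_cases hx : x ∈ insert i (G.neighborSet i)
    · rcases Set.mem_insert_iff.1 hx with rfl | hx
      · exact Or.inl (Or.inr rfl)
      · exact Or.inr (Or.inr hx)
    · rcases (hmem x).2 hx with h | h
      · exact Or.inl (Or.inl h)
      · exact Or.inr (Or.inl h)
  · ext x
    simp only [Set.mem_inter_iff, Set.mem_union, Set.mem_singleton_iff,
      Set.mem_empty_iff_false, iff_false, not_and]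
    rintro (hxD | rfl) (hxP | hxN)
    · exact absurd (Set.eq_empty_iff_forall_notMem.1 hDPdisj' x) (by simp [hxD, hxP])
    · exact hD'c x hxD (Set.mem_insert_of_mem _ hxN)
    · exact hP'c x hxP (Set.mem_insert _ _)
    · exact hiN hxN
  · intro u v huv
    by_cases hu : u ∈ insert i (G.neighborSet i)
    · rcases Set.mem_insert_iff.1 hu with rfl | hu
      · exact Or.inl ⟨Or.inr rfl, Or.inr ((hstar v).1 huv)⟩
      · rcases honly u v huv hu with rfl | hvD
        · exact Or.inr ⟨Or.inr hu, Or.inr rfl⟩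
        · exact Or.inr ⟨Or.inr hu, Or.inl hvD⟩
    · by_cases hv : v ∈ insert i (G.neighborSet i)
      · rcases Set.mem_insert_iff.1 hv with rfl | hv
        · exact absurd ((hstar u).1 huv.symm) (fun h => hu (Set.mem_insert_of_mem _ h))
        · rcases honly v u huv.symm hv with rfl | huD
          · exact absurd (Set.mem_insert _ _) hu
          · exact Or.inl ⟨Or.inl huD, Or.inr hv⟩
      · rcases hbip' ((hrestrict u v hu hv).1 huv) with ⟨h1, h2⟩ | ⟨h1, h2⟩
        · exact Or.inl ⟨Or.inl h1, Or.inl h2⟩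
        · exact Or.inr ⟨Or.inl h1, Or.inl h2⟩
  · rintro j (hjD | rfl)
    · have hjc := hD'c j hjD
      have hsplit : H.neighborSet j =
          H'.neighborSet j ∪ (H.neighborSet j ∩ G.neighborSet i) := by
        ext v
        simp only [Set.mem_union, Set.mem_inter_iff, SimpleGraph.mem_neighborSet]
        constructor
        · intro hv
          by_cases hvN : v ∈ G.neighborSet i
          · exact Or.inr ⟨hv, hvN⟩
          · by_cases hvi : v = i
            · subst hvi
              exact absurd ((hstar j).1 hv.symm)
                (fun h => hjc (Set.mem_insert_of_mem _ h))
            · exact Or.inl ((hrestrict j v hjc (by simp [hvi, hvN])).1 hv)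
        · rintro (hv | ⟨hv, _⟩)
          · exact (hrestrict j v hjc ((hG'out j v (hH'G hv)).2)).2 hv
          · exact hv
      have hdisj : Disjoint (H'.neighborSet j)
          (H.neighborSet j ∩ G.neighborSet i) := by
        rw [Set.disjoint_left]
        rintro v hv ⟨_, hvN⟩
        exact (hG'out j v (hH'G hv)).2 (Set.mem_insert_of_mem _ hvN)
      have hsub : (G'.neighborSet j).ncard ≤ (G.neighborSet j).ncard := by
        apply Set.ncard_le_ncard _ (Set.toFinite _)
        intro v hv
        exact ((hG' j v).1 hv).1
      rw [hsplit, Set.ncard_union_eq hdisj (Set.toFinite _) (Set.toFinite _),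
        hdeg' j hjD, hadd j hjD]
      set d' := (G'.neighborSet j).ncard
      set d := (G.neighborSet j).ncard
      rcases le_total (κ j) d' with h | h
      · rw [min_eq_left h, min_eq_right (h.trans hsub), min_eq_left (h.trans hsub)]
        omega
      · rw [min_eq_right h]
        rcases le_total d (κ j) with h2 | h2
        · rw [min_eq_left h2, min_eq_right h2]
          have : d' ≤ d := hsub
          omega
        · rw [min_eq_right h2, min_eq_left h2]
          omega
    · have : H.neighborSet j = G.neighborSet j := by
        ext v; exact hstar v
      rw [this, min_eq_right hi]
  · rintro j (hjP | hjN)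
    · rw [Set.ncard_pos (Set.toFinite _)]
      obtain ⟨v, hv⟩ := (Set.ncard_pos (Set.toFinite _)).1 (hpos' j hjP)
      exact ⟨v, (hrestrict j v (hP'c j hjP) ((hG'out j v (hH'G hv)).2)).2 hv⟩
    · rw [Set.ncard_pos (Set.toFinite _)]
      exact ⟨i, ((hstar j).2 hjN).symm⟩
end

section
/- In the local public goods game on a connected graph G with capacity function κ, every nicely balanced specialised profile is a pure strategy Nash equilibrium. -/
open scoped Classical

/-- Total quantity flowing to `i` from neighbours who nominate `i`. -/
noncomputable def inflow {V : Type*} [Fintype V] (G : SimpleGraph V)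
    (m : V → Set V) (x : V → ℕ) (i : V) : ℕ :=
  ∑ j ∈ Finset.univ.filter (fun j => G.Adj i j ∧ i ∈ m j), x j

/-- Player `i`'s utility: `f` of own action plus inflow, minus cost of own action. -/
noncomputable def payoff {V : Type*} [Fintype V] (G : SimpleGraph V) (f : ℕ → ℝ) (c : ℝ)
    (x : V → ℕ) (m : V → Set V) (i : V) : ℝ :=
  f (x i + inflow G m x i) - c * x i

/-- A nomination set for `i` is admissible if it consists of `min (κ i) (deg_G i)`
neighbours of `i`. -/
def Admissible {V : Type*} (G : SimpleGraph V) (κ : V → ℕ) (i : V) (s : Set V) : Prop :=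
  s ⊆ G.neighborSet i ∧ s.ncard = min (κ i) ((G.neighborSet i).ncard)

/-- In the local public goods game on a connected graph `G` with capacity `κ`,
every nicely balanced specialised profile is a pure strategy Nash equilibrium. -/
theorem nicelyBalanced_isNash {V : Type*} [Fintype V] (G : SimpleGraph V)
    (hconn : G.Connected) (κ : V → ℕ)
    (f : ℕ → ℝ) (c : ℝ) (hc : 0 < c) (xbar qstar : ℕ) (hq : qstar ≤ xbar)
    (hqmax : ∀ x ≤ xbar, f x - c * x ≤ f qstar - c * qstar)
    (hmono : ∀ x y : ℕ, qstar ≤ x → x ≤ y → f y - c * y ≤ f x - c * x)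
    (H : SimpleGraph V) (D P : Set V) (hH : IsDPSubgraph G κ H D P)
    (x : V → ℕ) (m : V → Set V)
    (hadm : ∀ i, Admissible G κ i (m i))
    (hxbar : ∀ i, x i ≤ xbar)
    (hD : ∀ i ∈ D, x i = qstar ∧ m i = H.neighborSet i)
    (hP : ∀ i ∈ P, x i = 0 ∧ (m i ∩ H.neighborSet i).Nonempty) :
    ∀ i : V, ∀ xi' ≤ xbar, ∀ mi' : Set V, Admissible G κ i mi' →
      payoff G f c (Function.update x i xi') (Function.update m i mi') i
        ≤ payoff G f c x m i := by
  obtain ⟨hHG, hDP, hDPdisj, hbip, hDdeg, hPdeg⟩ := hH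
  intro i xi' hxi' mi' hmi'
  have hfilter : (Finset.univ.filter (fun j => G.Adj i j ∧ i ∈ Function.update m i mi' j))
      = Finset.univ.filter (fun j => G.Adj i j ∧ i ∈ m j) := by
    apply Finset.filter_congr
    intro j _
    by_cases hji : j = i
    · subst hji; simp [G.irrefl]
    · simp [Function.update_of_ne hji]
  have hin : inflow G (Function.update m i mi') (Function.update x i xi') i
      = inflow G m x i := by
    unfold inflow
    rw [hfilter]
    refine Finset.sum_congr rfl fun j hj => ?_
    simp only [Finset.mem_filter] at hj
    have hji : j ≠ i := fun h => by subst h; exact G.irrefl hj.2.1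
    rw [Function.update_of_ne hji]
  unfold payoff
  rw [hin, Function.update_self]
  set w := inflow G m x i with hw
  have hiU : i ∈ D ∪ P := hDP ▸ Set.mem_univ i
  rcases hiU with hiD | hiP
  · have hw0 : w = 0 := by
      rw [hw]; unfold inflow
      apply Finset.sum_eq_zero
      intro j hj
      simp only [Finset.mem_filter] at hj
      by_cases hjD : j ∈ D
      · exfalso
        have hm := (hD j hjD).2
        have hadjH : H.Adj j i := by
          rw [← SimpleGraph.mem_neighborSet, ← hm]; exact hj.2.2
        rcases hbip hadjH with ⟨_, hiP⟩ | ⟨hjP, _⟩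
        · exact absurd (Set.mem_inter hiD hiP)
            (by rw [hDPdisj]; exact Set.notMem_empty i)
        · exact absurd (Set.mem_inter hjD hjP)
            (by rw [hDPdisj]; exact Set.notMem_empty j)
      · have hjP : j ∈ P := by
          have hjU : j ∈ D ∪ P := hDP ▸ Set.mem_univ j
          rcases hjU with h | h
          · exact absurd h hjD
          · exact h
        exact (hP j hjP).1
    rw [(hD i hiD).1, hw0]
    simpa using hqmax xi' hxi'
  · obtain ⟨j, hjH⟩ : ∃ j, H.Adj i j := by
      have hpos := hPdeg i hiP
      obtain ⟨j, hj⟩ := Set.nonempty_of_ncard_ne_zero hpos.ne'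
      exact ⟨j, hj⟩
    have hjD : j ∈ D := by
      rcases hbip hjH with ⟨hiD, _⟩ | ⟨_, hjD⟩
      · exact absurd (Set.mem_inter hiD hiP)
          (by rw [hDPdisj]; exact Set.notMem_empty i)
      · exact hjD
    have hjmem : j ∈ Finset.univ.filter (fun j => G.Adj i j ∧ i ∈ m j) := by
      simp only [Finset.mem_filter, Finset.mem_univ, true_and]
      refine ⟨hHG hjH, ?_⟩
      rw [(hD j hjD).2]
      exact hjH.symm
    have hwq : qstar ≤ w := by
      rw [hw]; unfold inflow
      calc qstar = x j := ((hD j hjD).1).symm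
        _ ≤ _ := Finset.single_le_sum (fun k _ => Nat.zero_le (x k)) hjmem
    have key := hmono w (xi' + w) hwq (Nat.le_add_left w xi')
    rw [(hP i hiP).1, Nat.zero_add]
    push_cast at key ⊢
    linarith
end

section
/- If (x*, m*) is a pure strategy Nash equilibrium of the local public goods game and x ≤ x* componentwise, then the best action evolution x^(0) = x, x^(t+1) = B_{m*}(x^(t)) satisfies x^(t+1) ≥ x* ≥ x^(t) for all even t and x^(t+1) ≤ x* ≤ x^(t) for all odd t. -/
open scoped Classical

/-- Best-action reply: each player plays `max (q* − inflow) 0`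
(truncated subtraction on ℕ). -/
noncomputable def bestReply {V : Type*} [Fintype V] (G : SimpleGraph V)
    (m : V → Set V) (qstar : ℕ) (x : V → ℕ) : V → ℕ :=
  fun i => qstar - inflow G m x i

lemma bestReply_antitone {V : Type*} [Fintype V] (G : SimpleGraph V)
    (m : V → Set V) (qstar : ℕ) {x y : V → ℕ} (h : x ≤ y) :
    bestReply G m qstar y ≤ bestReply G m qstar x := by
  intro i
  apply Nat.sub_le_sub_left
  exact Finset.sum_le_sum fun j _ => h j

/-- If `(x*, m*)` is a pure strategy Nash equilibrium (i.e. `x*` is a fixed point of the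
best-action reply) and `x ≤ x*` componentwise, then the best action evolution of `x`
sandwiches `x*`: for even `t`, `x^(t) ≤ x* ≤ x^(t+1)`; for odd `t`, `x^(t+1) ≤ x* ≤ x^(t)`. -/
theorem bestActionEvolution_sandwich {V : Type*} [Fintype V] (G : SimpleGraph V)
    (mstar : V → Set V) (qstar : ℕ) (xstar : V → ℕ)
    (hadm : ∀ j, mstar j ⊆ G.neighborSet j)
    (hNE : bestReply G mstar qstar xstar = xstar)
    (x : V → ℕ) (hx : x ≤ xstar) :
    ∀ t : ℕ,
      (Even t → (bestReply G mstar qstar)^[t] x ≤ xstar ∧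
        xstar ≤ (bestReply G mstar qstar)^[t + 1] x) ∧
      (Odd t → xstar ≤ (bestReply G mstar qstar)^[t] x ∧
        (bestReply G mstar qstar)^[t + 1] x ≤ xstar) := by
  intro t
  induction t with
  | zero =>
    refine ⟨fun _ => ⟨hx, ?_⟩, fun h => absurd h (by simp)⟩
    have := bestReply_antitone G mstar qstar hx
    rwa [hNE] at this
  | succ n ih =>
    constructor
    · intro he
      have ho : Odd n := Nat.Even.sub_odd (Nat.le_add_left 1 n) he odd_one
      obtain ⟨h1, h2⟩ := ih.2 ho
      refine ⟨h2, ?_⟩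
      have := bestReply_antitone G mstar qstar h2
      rw [hNE] at this
      rw [Function.iterate_succ_apply']
      exact this
    · intro ho
      have he : Even n := by
        rcases Nat.even_or_odd n with h | h
        · exact h
        · exact absurd ho (by simp [Nat.odd_add_one, h])
      obtain ⟨h1, h2⟩ := ih.1 he
      refine ⟨h2, ?_⟩
      have := bestReply_antitone G mstar qstar h2
      rw [hNE] at this
      rw [Function.iterate_succ_apply']
      exact this
end

section
/- Let (x*, m*) be a pure strategy Nash equilibrium and let x ≤ x* componentwise with best action evolution x^(t). If ℓ ∈ m*_i, x^(t)_ℓ > 0 and x^(t)_i > x^(t−1)_i, then x^(t+1)_ℓ < x^(t)_ℓ; and if ℓ ∈ m*_i, x^(t+1)_ℓ > 0 and x^(t)_i < x^(t−1)_i, then x^(t+1)_ℓ > x^(t)_ℓ. -/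
open scoped Classical

lemma inflow_mono {V : Type*} [Fintype V] (G : SimpleGraph V) (m : V → Set V)
    {x y : V → ℕ} (h : x ≤ y) (i : V) : inflow G m x i ≤ inflow G m y i :=
  Finset.sum_le_sum fun j _ => h j

lemma bestReply_anti {V : Type*} [Fintype V] (G : SimpleGraph V) (m : V → Set V)
    (q : ℕ) {x y : V → ℕ} (h : x ≤ y) : bestReply G m q y ≤ bestReply G m q x :=
  fun i => Nat.sub_le_sub_left (inflow_mono G m h i) q

lemma inflow_strict {V : Type*} [Fintype V] (G : SimpleGraph V) (m : V → Set V)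
    {x y : V → ℕ} (h : x ≤ y) {i ℓ : V} (hadj : G.Adj ℓ i) (hmem : ℓ ∈ m i)
    (hlt : x i < y i) : inflow G m x ℓ < inflow G m y ℓ :=
  Finset.sum_lt_sum (fun j _ => h j)
    ⟨i, Finset.mem_filter.2 ⟨Finset.mem_univ i, hadj, hmem⟩, hlt⟩

/-- Reaction along a nomination: in the best action evolution of some `x ≤ x*`,
if `ℓ` is nominated by `i`, then an increase (resp. decrease) of `i`'s action forces a
strict decrease (resp. increase) of `ℓ`'s next action, provided the relevant action of `ℓ`
is positive. (Stated with `t ≥ 1` via the substitution `t := t + 1`.) -/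
theorem bestActionEvolution_reaction {V : Type*} [Fintype V] (G : SimpleGraph V)
    (mstar : V → Set V) (qstar : ℕ) (xstar : V → ℕ)
    (hadm : ∀ j, mstar j ⊆ G.neighborSet j)
    (hNE : bestReply G mstar qstar xstar = xstar)
    (x : V → ℕ) (hx : x ≤ xstar)
    (i ℓ : V) (hnom : ℓ ∈ mstar i) :
    ∀ t : ℕ,
      ((0 < (bestReply G mstar qstar)^[t + 1] x ℓ ∧
          (bestReply G mstar qstar)^[t] x i < (bestReply G mstar qstar)^[t + 1] x i) →
        (bestReply G mstar qstar)^[t + 2] x ℓ < (bestReply G mstar qstar)^[t + 1] x ℓ) ∧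
      ((0 < (bestReply G mstar qstar)^[t + 2] x ℓ ∧
          (bestReply G mstar qstar)^[t + 1] x i < (bestReply G mstar qstar)^[t] x i) →
        (bestReply G mstar qstar)^[t + 1] x ℓ < (bestReply G mstar qstar)^[t + 2] x ℓ) := by
  set B := bestReply G mstar qstar with hB
  have hadj : G.Adj ℓ i := (G.mem_neighborSet i ℓ).1 (hadm i hnom) |>.symm
  -- sandwich: even iterates below x*, odd iterates above
  have sandwich : ∀ t : ℕ, (Even t → B^[t] x ≤ xstar) ∧ (Odd t → xstar ≤ B^[t] x) := by
    intro t
    induction t with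
    | zero => exact ⟨fun _ => hx, fun h => absurd h (by simp)⟩
    | succ n ih =>
      constructor
      · intro h
        have hn : Odd n := Nat.not_even_iff_odd.1 (Nat.even_add_one.1 h)
        have := ih.2 hn
        rw [Function.iterate_succ_apply']
        calc B (B^[n] x) ≤ B xstar := bestReply_anti G mstar qstar this
          _ = xstar := hNE
      · intro h
        have hn : Even n := Nat.not_odd_iff_even.1 fun ho => (Nat.not_even_iff_odd.2 h) (Odd.add_one ho)
        have := ih.1 hn
        rw [Function.iterate_succ_apply']
        calc xstar = B xstar := hNE.symm
          _ ≤ B (B^[n] x) := bestReply_anti G mstar qstar this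
  intro t
  have step : ∀ s : ℕ, B^[s + 1] x = B (B^[s] x) := fun s => Function.iterate_succ_apply' B s x
  rcases Nat.even_or_odd t with hev | hod
  · -- even t : B^[t] x ≤ xstar ≤ B^[t+1] x
    have hle : B^[t] x ≤ B^[t + 1] x :=
      le_trans ((sandwich t).1 hev) ((sandwich (t + 1)).2 (Even.add_one hev))
    constructor
    · rintro ⟨hpos, hlt⟩
      have hinf : inflow G mstar (B^[t] x) ℓ < inflow G mstar (B^[t + 1] x) ℓ :=
        inflow_strict G mstar hle hadj hnom hlt
      have hq : inflow G mstar (B^[t] x) ℓ < qstar := by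
        rw [step t] at hpos
        exact Nat.lt_of_sub_pos hpos
      have e1 : B^[t + 2] x ℓ = qstar - inflow G mstar (B^[t + 1] x) ℓ := by
        rw [show t + 2 = (t + 1) + 1 from rfl, step (t + 1)]; rfl
      have e2 : B^[t + 1] x ℓ = qstar - inflow G mstar (B^[t] x) ℓ := by
        rw [step t]; rfl
      rw [e1, e2]
      exact Nat.sub_lt_sub_left hq hinf
    · rintro ⟨_, hlt⟩
      exact absurd hlt (not_lt.2 (hle i))
  · -- odd t : B^[t+1] x ≤ xstar ≤ B^[t] x
    have hle : B^[t + 1] x ≤ B^[t] x :=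
      le_trans ((sandwich (t + 1)).1 (Odd.add_one hod)) ((sandwich t).2 hod)
    constructor
    · rintro ⟨_, hlt⟩
      exact absurd hlt (not_lt.2 (hle i))
    · rintro ⟨hpos, hlt⟩
      have hinf : inflow G mstar (B^[t + 1] x) ℓ < inflow G mstar (B^[t] x) ℓ :=
        inflow_strict G mstar hle hadj hnom hlt
      have hq : inflow G mstar (B^[t + 1] x) ℓ < qstar := by
        rw [show t + 2 = (t + 1) + 1 from rfl, step (t + 1)] at hpos
        exact Nat.lt_of_sub_pos hpos
      have e1 : B^[t + 2] x ℓ = qstar - inflow G mstar (B^[t + 1] x) ℓ := by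
        rw [show t + 2 = (t + 1) + 1 from rfl, step (t + 1)]; rfl
      have e2 : B^[t + 1] x ℓ = qstar - inflow G mstar (B^[t] x) ℓ := by
        rw [step t]; rfl
      rw [e1, e2]
      exact Nat.sub_lt_sub_left hq hinf
end

section
/- If (x*, m*) is a pure strategy Nash equilibrium of the local public goods game in which some player ℓ has 0 < x*_ℓ < q*, then (x*, m*) is not action stable: perturbing one coordinate by 1 yields a best action evolution that does not settle back in x*. -/
open scoped Classical

/-- The best action evolution of `x` settles in `xstar`. -/
def Settles {V : Type*} (B : (V → ℕ) → V → ℕ) (x xstar : V → ℕ) : Prop :=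
  ∃ t0 : ℕ, ∀ t ≥ t0, B^[t] x = xstar

/-- `(x, m)` is action stable: any single-coordinate perturbation of size at most some
`δ ≥ 1` has best action evolution settling back in `x`. -/
def ActionStable {V : Type*} (B : (V → ℕ) → V → ℕ) (x : V → ℕ) : Prop :=
  ∃ δ : ℕ, 1 ≤ δ ∧ ∀ (i : V) (x' : V → ℕ), (∀ j, j ≠ i → x' j = x j) →
    x' i ≤ x i + δ → x i ≤ x' i + δ → Settles B x' x

section Aux

variable {V : Type*} [Fintype V] (G : SimpleGraph V) (m : V → Set V) (q : ℕ)

lemma lpg_inflow_mono (x y : V → ℕ) (h : ∀ i, y i ≤ x i) (b : V) :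
    inflow G m y b ≤ inflow G m x b :=
  Finset.sum_le_sum fun j _ => h j

lemma lpg_inflow_strict (x y : V → ℕ) (h : ∀ i, y i ≤ x i) (a b : V)
    (hadj : G.Adj b a) (hmem : b ∈ m a) (hlt : y a < x a) :
    inflow G m y b < inflow G m x b := by
  apply Finset.sum_lt_sum (fun j _ => h j)
  exact ⟨a, by simp [hadj, hmem], hlt⟩

lemma lpg_step_down (x : V → ℕ) (hNE : bestReply G m q x = x)
    (y : V → ℕ) (a b : V) (hb0 : 0 < x b)
    (hadj : G.Adj b a) (hmem : b ∈ m a)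
    (hle : ∀ i, y i ≤ x i) (ha : y a + 1 ≤ x a) :
    (∀ i, x i ≤ bestReply G m q y i) ∧ x b + 1 ≤ bestReply G m q y b := by
  have hx : ∀ i, q - inflow G m x i = x i := fun i => congrFun hNE i
  constructor
  · intro i
    have h1 := lpg_inflow_mono G m x y hle i
    have h2 := hx i
    simp only [bestReply]
    omega
  · have h1 := lpg_inflow_strict G m x y hle a b hadj hmem (by omega)
    have h2 := hx b
    simp only [bestReply]
    omega

lemma lpg_step_up (x : V → ℕ) (hNE : bestReply G m q x = x)
    (y : V → ℕ) (a b : V) (hb0 : 0 < x b)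
    (hadj : G.Adj b a) (hmem : b ∈ m a)
    (hle : ∀ i, x i ≤ y i) (ha : x a + 1 ≤ y a) :
    (∀ i, bestReply G m q y i ≤ x i) ∧ bestReply G m q y b + 1 ≤ x b := by
  have hx : ∀ i, q - inflow G m x i = x i := fun i => congrFun hNE i
  constructor
  · intro i
    have h1 := lpg_inflow_mono G m y x hle i
    have h2 := hx i
    simp only [bestReply]
    omega
  · have h1 := lpg_inflow_strict G m y x hle a b hadj hmem (by omega)
    have h2 := hx b
    simp only [bestReply]
    omega

end Aux

/-- A pure strategy Nash equilibrium in which some player `ℓ` plays strictly between `0`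
and `q*` is not action stable. -/
theorem not_actionStable_of_interior {V : Type*} [Fintype V] (G : SimpleGraph V)
    (mstar : V → Set V) (qstar : ℕ) (xstar : V → ℕ)
    (hadm : ∀ j, mstar j ⊆ G.neighborSet j)
    (hNE : bestReply G mstar qstar xstar = xstar)
    (ℓ : V) (h0 : 0 < xstar ℓ) (hq : xstar ℓ < qstar) :
    ¬ ActionStable (bestReply G mstar qstar) xstar := by
  rintro ⟨δ, hδ, hstab⟩
  have hx : ∀ i, qstar - inflow G mstar xstar i = xstar i := fun i => congrFun hNE i
  -- every interior player has an interior "in-neighbor" (a nominator with positive play)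
  have hpred : ∀ j : V, ∃ a : V, (0 < xstar j ∧ xstar j < qstar) →
      (0 < xstar a ∧ xstar a < qstar) ∧ G.Adj j a ∧ j ∈ mstar a := by
    intro j
    by_cases hj : 0 < xstar j ∧ xstar j < qstar
    · obtain ⟨hj1, hj2⟩ := hj
      have hxj := hx j
      have hinfl : inflow G mstar xstar j ≠ 0 := by omega
      unfold inflow at hinfl
      obtain ⟨a, hamem, hane⟩ := Finset.exists_ne_zero_of_sum_ne_zero hinfl
      have hle : xstar a ≤ ∑ jj ∈ Finset.univ.filter (fun jj => G.Adj j jj ∧ j ∈ mstar jj),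
          xstar jj := Finset.single_le_sum (fun i _ => Nat.zero_le _) hamem
      have hle' : xstar a ≤ inflow G mstar xstar j := hle
      simp only [Finset.mem_filter, Finset.mem_univ, true_and] at hamem
      exact ⟨a, fun _ => ⟨⟨Nat.pos_of_ne_zero hane, by omega⟩, hamem.1, hamem.2⟩⟩
    · exact ⟨j, fun h => absurd h hj⟩
  choose f hf using hpred
  -- iterates of f starting at ℓ stay interior
  have hgL : ∀ t, 0 < xstar (f^[t] ℓ) ∧ xstar (f^[t] ℓ) < qstar := by
    intro t
    induction t with
    | zero => exact ⟨h0, hq⟩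
    | succ n ih => rw [Function.iterate_succ_apply']; exact (hf _ ih).1
  -- pigeonhole: f has a cycle among the iterates
  obtain ⟨na, nb, hab, heq⟩ : ∃ a b : ℕ, a < b ∧ f^[a] ℓ = f^[b] ℓ := by
    obtain ⟨a, b, hne, heq⟩ := Finite.exists_ne_map_eq_of_infinite (fun t : ℕ => f^[t] ℓ)
    rcases lt_or_gt_of_ne hne with h | h
    · exact ⟨a, b, h, heq⟩
    · exact ⟨b, a, h, heq.symm⟩
  set v : V := f^[na] ℓ with hv
  set k : ℕ := nb - na with hkdef
  have hk : 0 < k := by omega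
  have hper : f^[k] v = v := by
    rw [hv, ← Function.iterate_add_apply, hkdef, Nat.sub_add_cancel (le_of_lt hab)]
    exact heq.symm
  -- the forward chain along the cycle
  set w : ℕ → V := fun t => f^[(k - 1) * t] v with hw
  have hwL : ∀ n, 0 < xstar (f^[n] v) ∧ xstar (f^[n] v) < qstar := by
    intro n
    induction n with
    | zero => exact hgL na
    | succ n ih => rw [Function.iterate_succ_apply']; exact (hf _ ih).1
  have hwLt : ∀ t, 0 < xstar (w t) ∧ xstar (w t) < qstar := fun t => hwL _
  have hstepw : ∀ t, f (w (t + 1)) = w t := by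
    intro t
    show f (f^[(k - 1) * (t + 1)] v) = f^[(k - 1) * t] v
    have hmul : (k - 1) * (t + 1) = (k - 1) * t + (k - 1) := Nat.mul_succ _ _
    have hidx : (k - 1) * (t + 1) + 1 = (k - 1) * t + k := by omega
    calc f (f^[(k - 1) * (t + 1)] v) = f^[(k - 1) * (t + 1) + 1] v :=
          (Function.iterate_succ_apply' f _ v).symm
      _ = f^[(k - 1) * t + k] v := by rw [hidx]
      _ = f^[(k - 1) * t] (f^[k] v) := Function.iterate_add_apply f _ _ v
      _ = f^[(k - 1) * t] v := by rw [hper]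
  have hchain : ∀ t, G.Adj (w (t + 1)) (w t) ∧ w (t + 1) ∈ mstar (w t) := by
    intro t
    have h := hf (w (t + 1)) (hwLt (t + 1))
    rw [hstepw t] at h
    exact h.2
  -- the perturbation: decrease w 0 by one
  set x' : V → ℕ := Function.update xstar (w 0) (xstar (w 0) - 1) with hx'
  have hx'w : x' (w 0) = xstar (w 0) - 1 := Function.update_self _ _ _
  have hx'ne : ∀ j, j ≠ w 0 → x' j = xstar j := fun j hj => Function.update_of_ne hj _ _
  have hsettle : Settles (bestReply G mstar qstar) x' xstar := by
    apply hstab (w 0) x' hx'ne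
    · rw [hx'w]; omega
    · rw [hx'w]; have := (hwLt 0).1; omega
  -- the main invariant: the deviation never dies
  have hmain : ∀ t, ((∀ i, (bestReply G mstar qstar)^[t] x' i ≤ xstar i) ∧
      (bestReply G mstar qstar)^[t] x' (w t) + 1 ≤ xstar (w t)) ∨
      ((∀ i, xstar i ≤ (bestReply G mstar qstar)^[t] x' i) ∧
      xstar (w t) + 1 ≤ (bestReply G mstar qstar)^[t] x' (w t)) := by
    intro t
    induction t with
    | zero =>
      left
      constructor
      · intro i
        by_cases h : i = w 0
        · subst h; rw [Function.iterate_zero_apply, hx'w]; omega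
        · rw [Function.iterate_zero_apply, hx'ne i h]
      · rw [Function.iterate_zero_apply, hx'w]
        have := (hwLt 0).1; omega
    | succ n ih =>
      rw [Function.iterate_succ_apply']
      rcases ih with ⟨hle, hlt⟩ | ⟨hle, hlt⟩
      · right
        exact lpg_step_down G mstar qstar xstar hNE _ (w n) (w (n + 1)) (hwLt (n + 1)).1
          (hchain n).1 (hchain n).2 hle hlt
      · left
        exact lpg_step_up G mstar qstar xstar hNE _ (w n) (w (n + 1)) (hwLt (n + 1)).1
          (hchain n).1 (hchain n).2 hle hlt
  obtain ⟨t0, ht0⟩ := hsettle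
  have h1 := hmain t0
  have h2 := ht0 t0 le_rfl
  rw [h2] at h1
  rcases h1 with ⟨_, h⟩ | ⟨_, h⟩ <;> omega
end

section
/- Suppose (x*, m*) is a nicely balanced specialised profile induced by a κ-DP-subgraph H of G in which some vertex i ∈ P has deg_H(i) = 1. Then (x*, m*) is not action stable. -/
open scoped Classical

/-- A nicely balanced specialised profile induced by a κ-DP-subgraph `H` of `G` in which
some vertex `i ∈ P` has `deg_H i = 1` is not action stable. -/
theorem not_actionStable_of_degOne {V : Type*} [Fintype V] (G : SimpleGraph V)
    (κ : V → ℕ) (qstar : ℕ) (hq : 1 ≤ qstar)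
    (H : SimpleGraph V) (D P : Set V) (hH : IsDPSubgraph G κ H D P)
    (xstar : V → ℕ) (mstar : V → Set V)
    (hadm : ∀ j, mstar j ⊆ G.neighborSet j ∧
      (mstar j).ncard = min (κ j) ((G.neighborSet j).ncard))
    (hD : ∀ j ∈ D, xstar j = qstar ∧ mstar j = H.neighborSet j)
    (hP : ∀ j ∈ P, xstar j = 0 ∧ (mstar j ∩ H.neighborSet j).Nonempty)
    (i : V) (hiP : i ∈ P) (hdeg : (H.neighborSet i).ncard = 1) :
    ¬ ActionStable (bestReply G mstar qstar) xstar := by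
  obtain ⟨hHG, hunion, hdisj, hbip, hdegD, hdegP⟩ := hH
  have hmem : ∀ j : V, j ∈ D ∨ j ∈ P := by
    intro j
    have : j ∈ D ∪ P := hunion ▸ Set.mem_univ j
    exact this
  have hnotboth : ∀ j : V, j ∈ D → j ∈ P → False := by
    intro j h1 h2
    have : j ∈ D ∩ P := ⟨h1, h2⟩
    rw [hdisj] at this
    exact this
  obtain ⟨k, hk⟩ := Set.ncard_eq_one.mp hdeg
  have hik : H.Adj i k := by
    have : k ∈ H.neighborSet i := by rw [hk]; rfl
    exact this
  have hkD : k ∈ D := by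
    rcases hbip hik with ⟨h1, h2⟩ | ⟨h1, h2⟩
    · exact absurd hiP (fun h => hnotboth i h1 h)
    · exact h2
  have hkmi : k ∈ mstar i := by
    obtain ⟨z, hz1, hz2⟩ := (hP i hiP).2
    rw [hk] at hz2
    rwa [hz2] at hz1
  set B := bestReply G mstar qstar with hB
  -- Step A: if all P-vertices are 0, then all D-vertices become qstar
  have hstepA : ∀ x : V → ℕ, (∀ j ∈ P, x j = 0) → ∀ j ∈ D, B x j = qstar := by
    intro x hx j hjD
    have hinf : inflow G mstar x j = 0 := by
      apply Finset.sum_eq_zero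
      intro l hl
      simp only [Finset.mem_filter] at hl
      obtain ⟨-, hadj, hjm⟩ := hl
      rcases hmem l with hlD | hlP
      · exfalso
        rw [(hD l hlD).2] at hjm
        rcases hbip hjm with ⟨h1, h2⟩ | ⟨h1, h2⟩
        · exact hnotboth j hjD h2
        · exact hnotboth l hlD h1
      · exact hx l hlP
    simp [hB, bestReply, hinf]
  -- Step A2: if all P-vertices are 0 and x k ≤ qstar - 1, then B x i ≥ 1
  have hstepA2 : ∀ x : V → ℕ, (∀ j ∈ P, x j = 0) → x k ≤ qstar - 1 → 1 ≤ B x i := by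
    intro x hx hxk
    have hkfil : k ∈ Finset.univ.filter (fun j => G.Adj i j ∧ i ∈ mstar j) := by
      simp only [Finset.mem_filter, Finset.mem_univ, true_and]
      refine ⟨hHG hik, ?_⟩
      rw [(hD k hkD).2]
      exact hik.symm
    have hinf : inflow G mstar x i = x k := by
      apply Finset.sum_eq_single_of_mem k hkfil
      intro l hl hlk
      simp only [Finset.mem_filter] at hl
      obtain ⟨-, hadj, him⟩ := hl
      rcases hmem l with hlD | hlP
      · exfalso
        rw [(hD l hlD).2] at him
        have : l ∈ H.neighborSet i := him.symm
        rw [hk] at this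
        exact hlk this
      · exact hx l hlP
    have : inflow G mstar x i ≤ qstar - 1 := by rw [hinf]; exact hxk
    simp only [hB, bestReply]
    omega
  -- Step B: if all D-vertices are qstar, then all P-vertices become 0
  have hstepB : ∀ x : V → ℕ, (∀ j ∈ D, x j = qstar) → ∀ j ∈ P, B x j = 0 := by
    intro x hx j hjP
    have hne : (H.neighborSet j).Nonempty := by
      rcases Set.eq_empty_or_nonempty (H.neighborSet j) with h | h
      · exfalso; have := hdegP j hjP; rw [h] at this; simp at this
      · exact h
    obtain ⟨l, hl⟩ := hne
    have hjl : H.Adj j l := hl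
    have hlD : l ∈ D := by
      rcases hbip hjl with ⟨h1, h2⟩ | ⟨h1, h2⟩
      · exact absurd hjP (fun h => hnotboth j h1 h)
      · exact h2
    have hlfil : l ∈ Finset.univ.filter (fun l' => G.Adj j l' ∧ j ∈ mstar l') := by
      simp only [Finset.mem_filter, Finset.mem_univ, true_and]
      refine ⟨hHG hjl, ?_⟩
      rw [(hD l hlD).2]
      exact hjl.symm
    have hinf : qstar ≤ inflow G mstar x j := by
      have h1 : x l ≤ inflow G mstar x j :=
        Finset.single_le_sum (f := fun l' => x l') (fun l' _ => Nat.zero_le _) hlfil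
      rw [hx l hlD] at h1
      exact h1
    simp only [hB, bestReply]
    omega
  -- Step B2: if x i ≥ 1 then B x k ≤ qstar - 1
  have hstepB2 : ∀ x : V → ℕ, 1 ≤ x i → B x k ≤ qstar - 1 := by
    intro x hx
    have hifil : i ∈ Finset.univ.filter (fun l' => G.Adj k l' ∧ k ∈ mstar l') := by
      simp only [Finset.mem_filter, Finset.mem_univ, true_and]
      exact ⟨hHG hik.symm, hkmi⟩
    have hinf : 1 ≤ inflow G mstar x k := by
      have h1 : x i ≤ inflow G mstar x k :=
        Finset.single_le_sum (f := fun l' => x l') (fun l' _ => Nat.zero_le _) hifil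
      omega
    simp only [hB, bestReply]
    omega
  -- the perturbation
  set x0 : V → ℕ := Function.update xstar k (qstar - 1) with hx0
  have hkP : k ∉ P := fun h => hnotboth k hkD h
  have main : ∀ s : ℕ, (∀ j ∈ P, (B^[2*s]) x0 j = 0) ∧ (B^[2*s]) x0 k ≤ qstar - 1 := by
    intro s
    induction s with
    | zero =>
      constructor
      · intro j hjP
        simp only [Nat.mul_zero, Function.iterate_zero, id]
        rw [hx0, Function.update_of_ne (by intro h; subst h; exact hkP hjP)]
        exact (hP j hjP).1
      · simp [hx0]
    | succ s ih =>
      have h1 : ∀ j ∈ D, (B ((B^[2*s]) x0)) j = qstar := hstepA _ ih.1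
      have h2 : 1 ≤ (B ((B^[2*s]) x0)) i := hstepA2 _ ih.1 ih.2
      have hiter : (B^[2*(s+1)]) x0 = B (B ((B^[2*s]) x0)) := by
        have : 2*(s+1) = (2*s + 1) + 1 := by ring
        rw [this, Function.iterate_succ_apply', Function.iterate_succ_apply']
      rw [hiter]
      exact ⟨hstepB _ h1, hstepB2 _ h2⟩
  rintro ⟨δ, hδ, hstab⟩
  have hx0k : x0 k = qstar - 1 := by simp [hx0]
  have hxsk : xstar k = qstar := (hD k hkD).1
  have hset : Settles B x0 xstar := by
    apply hstab k x0
    · intro j hj; exact Function.update_of_ne hj _ _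
    · rw [hx0k, hxsk]; omega
    · rw [hx0k, hxsk]; omega
  obtain ⟨t0, ht0⟩ := hset
  have heq := ht0 (2*t0) (by omega)
  have := (main t0).2
  rw [heq, hxsk] at this
  omega
end

section
/- Let q* ≥ 2 and let (x*, m*) be a nicely balanced specialised profile induced by a κ-DP-subgraph H of G such that deg_H(i) = 2 for all i ∈ P. Then (x*, m*) is action stable: for any player i and any x' differing from x* only in coordinate i with |x'_i − x*_i| ≤ 1, the best action evolution of x' settles in x*. -/
open scoped Classical

/-- If `q* ≥ 2` and `(x*, m*)` is a nicely balanced specialised profile induced by a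
κ-DP-subgraph `H` in which every `i ∈ P` has `deg_H i = 2`, then `(x*, m*)` is action
stable: any single-coordinate perturbation of size at most `1` settles back in `x*`. -/
theorem actionStable_of_degTwo {V : Type*} [Fintype V] (G : SimpleGraph V)
    (κ : V → ℕ) (qstar : ℕ) (hq : 2 ≤ qstar)
    (H : SimpleGraph V) (D P : Set V) (hH : IsDPSubgraph G κ H D P)
    (xstar : V → ℕ) (mstar : V → Set V)
    (hadm : ∀ j, mstar j ⊆ G.neighborSet j ∧
      (mstar j).ncard = min (κ j) ((G.neighborSet j).ncard))
    (hD : ∀ j ∈ D, xstar j = qstar ∧ mstar j = H.neighborSet j)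
    (hP : ∀ j ∈ P, xstar j = 0 ∧ (mstar j ∩ H.neighborSet j).Nonempty)
    (hdeg : ∀ i ∈ P, (H.neighborSet i).ncard = 2) :
    ∀ (i : V) (x' : V → ℕ), (∀ j, j ≠ i → x' j = xstar j) →
      x' i ≤ xstar i + 1 → xstar i ≤ x' i + 1 →
      Settles (bestReply G mstar qstar) x' xstar := by
  obtain ⟨hHG, hunion, hinter, hbip, hDdeg, hPdeg⟩ := hH
  intro i x' hx' hup hdown
  have hmem : ∀ v : V, v ∈ D ∨ v ∈ P := by
    intro v
    have hv : v ∈ D ∪ P := by rw [hunion]; trivial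
    exact hv
  have hnot : ∀ v : V, v ∈ D → v ∈ P → False := by
    intro v h1 h2
    have hv : v ∈ D ∩ P := ⟨h1, h2⟩
    rw [hinter] at hv
    exact hv
  -- any vertex nominating a D-vertex lies in P
  have hcontrib : ∀ k, k ∈ D → ∀ j, k ∈ mstar j → j ∈ P := by
    intro k hk j hkm
    rcases hmem j with hj | hj
    · exfalso
      rw [(hD j hj).2, SimpleGraph.mem_neighborSet] at hkm
      rcases hbip hkm with ⟨_, h2⟩ | ⟨h1, _⟩
      · exact hnot k hk h2
      · exact hnot j hj h1
    · exact hj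
  -- inflow lower bound at P-vertices
  have hPinflow : ∀ (y : V → ℕ), (∀ j ∈ D, qstar - 1 ≤ y j) →
      ∀ k ∈ P, qstar ≤ inflow G mstar y k := by
    intro y hy k hk
    set S : Finset V := (H.neighborSet k).toFinset with hS
    have hScard : S.card = 2 := by
      rw [hS, ← Set.ncard_eq_toFinset_card']
      exact hdeg k hk
    have hSD : ∀ j ∈ S, j ∈ D := by
      intro j hj
      rw [hS, Set.mem_toFinset, SimpleGraph.mem_neighborSet] at hj
      rcases hbip hj with ⟨h1, _⟩ | ⟨_, h2⟩
      · exact (hnot k h1 hk).elim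
      · exact h2
    have hsub : S ⊆ Finset.univ.filter (fun j => G.Adj k j ∧ k ∈ mstar j) := by
      intro j hj
      have hjD := hSD j hj
      rw [hS, Set.mem_toFinset, SimpleGraph.mem_neighborSet] at hj
      refine Finset.mem_filter.mpr ⟨Finset.mem_univ j, hHG hj, ?_⟩
      rw [(hD j hjD).2, SimpleGraph.mem_neighborSet]
      exact hj.symm
    have h1 : ∑ j ∈ S, y j ≤ inflow G mstar y k := by
      rw [inflow]
      exact Finset.sum_le_sum_of_subset hsub
    have h2 : S.card • (qstar - 1) ≤ ∑ j ∈ S, y j :=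
      Finset.card_nsmul_le_sum S y (qstar - 1) (fun j hj => hy j (hSD j hj))
    rw [hScard, smul_eq_mul] at h2
    omega
  -- key lemma: if y vanishes on P and is ≥ q*-1 on D, then B y = x*
  have keyA : ∀ y : V → ℕ, (∀ j ∈ P, y j = 0) → (∀ j ∈ D, qstar - 1 ≤ y j) →
      bestReply G mstar qstar y = xstar := by
    intro y hyP hyD
    funext k
    rcases hmem k with hk | hk
    · have h0 : inflow G mstar y k = 0 := by
        rw [inflow]
        apply Finset.sum_eq_zero
        intro j hj
        rw [Finset.mem_filter] at hj
        exact hyP j (hcontrib k hk j hj.2.2)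
      rw [bestReply]
      simp only [h0, Nat.sub_zero]
      exact ((hD k hk).1).symm
    · have h0 := hPinflow y hyD k hk
      rw [bestReply]
      simp only [Nat.sub_eq_zero_of_le h0]
      exact ((hP k hk).1).symm
  -- after one step the state is good
  have goodP : ∀ j ∈ P, bestReply G mstar qstar x' j = 0 := by
    intro j hj
    have hx'D : ∀ t ∈ D, qstar - 1 ≤ x' t := by
      intro t ht
      by_cases hti : t = i
      · subst hti
        have := (hD t ht).1
        omega
      · rw [hx' t hti, (hD t ht).1]
        omega
    have := hPinflow x' hx'D j hj
    rw [bestReply]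
    simp only [Nat.sub_eq_zero_of_le this]
  have goodD : ∀ j ∈ D, qstar - 1 ≤ bestReply G mstar qstar x' j := by
    intro j hj
    have hbound : inflow G mstar x' j ≤ 1 := by
      rw [inflow]
      calc ∑ t ∈ Finset.univ.filter (fun t => G.Adj j t ∧ j ∈ mstar t), x' t
          ≤ ∑ t ∈ Finset.univ.filter (fun t => G.Adj j t ∧ j ∈ mstar t),
              (if t = i then 1 else 0) := by
            apply Finset.sum_le_sum
            intro t ht
            rw [Finset.mem_filter] at ht
            have htP : t ∈ P := hcontrib j hj t ht.2.2
            by_cases hti : t = i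
            · subst hti
              rw [if_pos rfl]
              have := (hP t htP).1
              omega
            · rw [hx' t hti, (hP t htP).1, if_neg hti]
        _ ≤ ∑ t ∈ Finset.univ, (if t = i then 1 else 0) :=
            Finset.sum_le_sum_of_subset (Finset.filter_subset _ _)
        _ = 1 := by simp
    rw [bestReply]
    omega
  have h2 : bestReply G mstar qstar (bestReply G mstar qstar x') = xstar :=
    keyA _ goodP goodD
  have hfix : bestReply G mstar qstar xstar = xstar := by
    apply keyA
    · intro j hj; exact (hP j hj).1
    · intro j hj; rw [(hD j hj).1]; omega
  refine ⟨2, ?_⟩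
  intro t ht
  obtain ⟨k, rfl⟩ := Nat.exists_eq_add_of_le ht
  rw [Nat.add_comm, Function.iterate_add_apply]
  have h2' : (bestReply G mstar qstar)^[2] x' = xstar := by
    simp [Function.iterate_succ, Function.comp, h2]
  rw [h2']
  exact Function.iterate_fixed hfix k
end

section
/- For any finite graph G with at least one vertex and capacity function κ, the maximum size of a D-set satisfies δ^κ_max(G) ≤ |V| − min(κ̲, d̲), where κ̲ = min_i κ(i) and d̲ is the minimum degree of G. -/
def DSetSizes {V : Type*} (G : SimpleGraph V) (κ : V → ℕ) : Set ℕ :=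
  {n | ∃ (H : SimpleGraph V) (D P : Set V), IsDPSubgraph G κ H D P ∧ D.ncard = n}

/-- `δ^κ_max(G) ≤ |V| − min κ̲ d̲` where `κ̲ = min κ` and `d̲` is the minimum degree. -/
theorem deltaMax_upper_bound {V : Type*} [Fintype V] [Nonempty V]
    (G : SimpleGraph V) (κ : V → ℕ) :
    sSup (DSetSizes G κ) ≤ Fintype.card V -
      min (Finset.univ.inf' Finset.univ_nonempty κ)
        (Finset.univ.inf' Finset.univ_nonempty (fun v => (G.neighborSet v).ncard)) := by
  set m := min (Finset.univ.inf' Finset.univ_nonempty κ)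
      (Finset.univ.inf' Finset.univ_nonempty (fun v => (G.neighborSet v).ncard)) with hm
  have key : ∀ n ∈ DSetSizes G κ, n ≤ Fintype.card V - m := by
    rintro n ⟨H, D, P, ⟨hle, hunion, hdisj, hbip, hdeg, hP⟩, rfl⟩
    rcases D.eq_empty_or_nonempty with hD | ⟨d, hd⟩
    · simp [hD]
    · have hsub : H.neighborSet d ⊆ P := by
        intro v hv
        rcases hbip hv with ⟨h1, h2⟩ | ⟨h1, h2⟩
        · exact h2
        · exact absurd (hdisj ▸ Set.mem_inter hd h1) (Set.notMem_empty d)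
      have hPm : m ≤ P.ncard := by
        have h1 : m ≤ (H.neighborSet d).ncard := by
          rw [hdeg d hd]
          have hκ : Finset.univ.inf' Finset.univ_nonempty κ ≤ κ d :=
            Finset.inf'_le _ (Finset.mem_univ d)
          have hg : Finset.univ.inf' Finset.univ_nonempty
              (fun v => (G.neighborSet v).ncard) ≤ (G.neighborSet d).ncard :=
            Finset.inf'_le _ (Finset.mem_univ d)
          omega
        exact h1.trans (Set.ncard_le_ncard hsub P.toFinite)
      have hDP : D.ncard + P.ncard = Fintype.card V := by
        rw [← Set.ncard_union_eq (Set.disjoint_iff_inter_eq_empty.mpr hdisj)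
          D.toFinite P.toFinite, hunion, Set.ncard_univ, Nat.card_eq_fintype_card]
      omega
  rcases Set.eq_empty_or_nonempty (DSetSizes G κ) with hne | hne
  · simp [hne]
  · exact csSup_le hne key
end

section
/- Let G be the complete graph K_n and suppose κ(i) = k for all vertices with 1 ≤ k ≤ n − 1. Then there exists a κ-DP-subgraph of K_n whose D-set has size exactly ⌈n/(1+k)⌉, and hence δ^κ_min(K_n) = ⌈n/(1+k)⌉. -/
lemma top_nbr_ncard (n : ℕ) (i : Fin n) :
    ((⊤ : SimpleGraph (Fin n)).neighborSet i).ncard = n - 1 := by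
  have h1 : ((⊤ : SimpleGraph (Fin n)).neighborSet i) = Set.univ \ {i} := by
    ext j
    simp [SimpleGraph.neighborSet, eq_comm, Ne]
  rw [h1, Set.ncard_diff (by simp) (Set.toFinite _)]
  simp [Set.ncard_univ]

lemma interval_ncard (n c k : ℕ) (h : c + k ≤ n) :
    {j : Fin n | c ≤ j.val ∧ j.val < c + k}.ncard = k := by
  have h2 : ∀ t ∈ Finset.Ico c (c + k), t < n := by
    intro t ht; rw [Finset.mem_Ico] at ht; omega
  have h1 : {j : Fin n | c ≤ j.val ∧ j.val < c + k} =
      ((Finset.Ico c (c + k)).attachFin h2 : Finset (Fin n)) := by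
    ext j
    simp [Finset.mem_attachFin, Finset.mem_Ico]
  rw [h1, Set.ncard_coe_finset, Finset.card_attachFin, Nat.card_Ico]
  omega

/-- On the complete graph `K_n` with constant capacity `k` (`1 ≤ k ≤ n − 1`), there is a
κ-DP-subgraph whose `D`-set has size exactly `⌈n/(1+k)⌉ = (n + k)/(k + 1)`, and
`δ^κ_min(K_n) = ⌈n/(1+k)⌉`. -/
theorem complete_deltaMin (n k : ℕ) (hk1 : 1 ≤ k) (hk2 : k ≤ n - 1) :
    (∃ (H : SimpleGraph (Fin n)) (D P : Set (Fin n)),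
        IsDPSubgraph (⊤ : SimpleGraph (Fin n)) (fun _ => k) H D P ∧
        D.ncard = (n + k) / (k + 1)) ∧
    sInf (DSetSizes (⊤ : SimpleGraph (Fin n)) (fun _ => k)) = (n + k) / (k + 1) := by
  classical
  have hn : k + 1 ≤ n := by omega
  obtain ⟨m, hm⟩ : ∃ m, (n + k) / (k + 1) = m := ⟨_, rfl⟩
  rw [hm]
  obtain ⟨A, hA⟩ : ∃ A, m * k = A := ⟨_, rfl⟩
  have hr : (n + k) % (k + 1) < k + 1 := Nat.mod_lt _ (by omega)
  have hM : A + m + (n + k) % (k + 1) = n + k := by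
    rw [← hA, ← hm]
    conv_rhs => rw [← Nat.div_add_mod (n + k) (k + 1)]
    ring
  -- n ≤ A + m, i.e. n - m ≤ m*k
  have hnAm : n ≤ A + m := by omega
  -- m + k ≤ n
  have hmk : m + k ≤ n := by
    obtain ⟨w, hw⟩ : ∃ w, n - k = w := ⟨_, rfl⟩
    have hw2 : n = k + w := by omega
    have h1 : (n + k) / (k + 1) ≤ w := by
      rw [Nat.div_le_iff_le_mul_add_pred (by omega), Nat.add_sub_cancel]
      have h3 : k * 1 ≤ k * w := Nat.mul_le_mul_left k (by omega)
      have h4 : (k + 1) * w = k * w + w := by ring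
      linarith
    omega
  have hm1 : 1 ≤ m := by
    have : 1 ≤ (n + k) / (k + 1) := (Nat.one_le_div_iff (by omega)).mpr (by omega)
    omega
  obtain ⟨q, hq⟩ : ∃ q, n - m = q := ⟨_, rfl⟩
  have hkq : k ≤ q := by omega
  have hqA : q ≤ A := by omega
  -- the D and P sets
  set D : Set (Fin n) := {v | v.val < m} with hD
  set P : Set (Fin n) := {v | m ≤ v.val} with hP
  -- the window function
  set c : ℕ → ℕ := fun i => m + min (i * k) (q - k) with hc
  have hck : ∀ i, c i + k ≤ n := by
    intro i; simp only [hc]; omega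
  set r : Fin n → Fin n → Prop :=
    fun i j => i.val < m ∧ c i.val ≤ j.val ∧ j.val < c i.val + k with hrdef
  set H : SimpleGraph (Fin n) := SimpleGraph.fromRel r with hH
  have hAdj : ∀ u v : Fin n, H.Adj u v ↔ u ≠ v ∧ (r u v ∨ r v u) := by
    intro u v; rw [hH]; exact Iff.rfl
  have hcm : ∀ i : ℕ, m ≤ c i := fun i => Nat.le_add_right _ _
  -- neighbor set of a D-vertex is the window
  have hnbrD : ∀ i : Fin n, i.val < m →
      H.neighborSet i = {j : Fin n | c i.val ≤ j.val ∧ j.val < c i.val + k} := by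
    intro i hi
    ext j
    simp only [SimpleGraph.mem_neighborSet, hAdj, Set.mem_setOf_eq]
    constructor
    · rintro ⟨hne, hrij | hrji⟩
      · exact ⟨hrij.2.1, hrij.2.2⟩
      · exfalso; have := hrji.2.1; have := hcm j.val; omega
    · intro ⟨h1, h2⟩
      have hne : i ≠ j := by
        intro h; rw [h] at hi; have := hcm i.val; omega
      exact ⟨hne, Or.inl ⟨hi, h1, h2⟩⟩
  -- every P-vertex has a neighbor
  have hnbrP : ∀ j : Fin n, m ≤ j.val → ∃ i : Fin n, H.Adj j i := by
    intro j hj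
    obtain ⟨t, ht⟩ : ∃ t, j.val - m = t := ⟨_, rfl⟩
    have htq : t < q := by have := j.isLt; omega
    have hi0 : t / k < m := by
      rw [Nat.div_lt_iff_lt_mul (by omega)]
      calc t < q := htq
        _ ≤ A := hqA
        _ = m * k := hA.symm
    refine ⟨⟨t / k, by omega⟩, ?_⟩
    rw [hAdj]
    have hdm : k * (t / k) + t % k = t := Nat.div_add_mod t k
    have hmod : t % k < k := Nat.mod_lt _ (by omega)
    obtain ⟨B, hB⟩ : ∃ B, (t / k) * k = B := ⟨_, rfl⟩
    have hB' : k * (t / k) = B := by rw [← hB]; ring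
    rw [hB'] at hdm
    have hwin : c (t / k) ≤ j.val ∧ j.val < c (t / k) + k := by
      simp only [hc, hB]; omega
    have hne : j ≠ ⟨t / k, by omega⟩ := by
      intro h
      have : j.val = t / k := by rw [h]
      omega
    exact ⟨hne, Or.inr ⟨hi0, hwin.1, hwin.2⟩⟩
  -- degree of D-vertices
  have hdegD : ∀ i : Fin n, i.val < m → (H.neighborSet i).ncard = k := by
    intro i hi
    rw [hnbrD i hi]
    exact interval_ncard n _ k (hck i.val)
  have hIsDP : IsDPSubgraph (⊤ : SimpleGraph (Fin n)) (fun _ => k) H D P := by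
    refine ⟨le_top, ?_, ?_, ?_, ?_, ?_⟩
    · ext v; simp only [hD, hP, Set.mem_union, Set.mem_setOf_eq, Set.mem_univ, iff_true]; omega
    · ext v; simp only [hD, hP, Set.mem_inter_iff, Set.mem_setOf_eq, Set.mem_empty_iff_false,
        iff_false, not_and]; omega
    · intro u v huv
      rw [hAdj] at huv
      rcases huv.2 with h1 | h1
      · left
        refine ⟨h1.1, ?_⟩
        simp only [hP, Set.mem_setOf_eq]
        have := hcm u.val; omega
      · right
        refine ⟨?_, h1.1⟩
        simp only [hP, Set.mem_setOf_eq]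
        have := hcm v.val; omega
    · intro i hi
      show (H.neighborSet i).ncard = min k (((⊤ : SimpleGraph (Fin n)).neighborSet i).ncard)
      rw [hdegD i hi, top_nbr_ncard]
      omega
    · intro j hj
      rw [Set.ncard_pos (Set.toFinite _)]
      obtain ⟨i, hij⟩ := hnbrP j hj
      exact ⟨i, hij⟩
  -- |D| = m
  have hDcard : D.ncard = m := by
    have hDeq : D = {j : Fin n | 0 ≤ j.val ∧ j.val < 0 + m} := by
      ext j; simp [hD]
    rw [hDeq]
    simpa using interval_ncard n 0 m (by omega)
  constructor
  · exact ⟨H, D, P, hIsDP, hDcard⟩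
  · -- sInf part
    have hmem : m ∈ DSetSizes (⊤ : SimpleGraph (Fin n)) (fun _ => k) :=
      ⟨H, D, P, hIsDP, hDcard⟩
    have hlb : ∀ x ∈ DSetSizes (⊤ : SimpleGraph (Fin n)) (fun _ => k), m ≤ x := by
      rintro x ⟨H', D', P', ⟨_, hunion, hinter, hbip, hdeg, hpos⟩, hcard⟩
      have hfinD : D'.Finite := Set.toFinite _
      have hfinP : P'.Finite := Set.toFinite _
      have hcov : ∀ p ∈ P', ∃ d ∈ D', p ∈ H'.neighborSet d := by
        intro p hp
        have hpos' := hpos p hp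
        rw [Set.ncard_pos (Set.toFinite _)] at hpos'
        obtain ⟨u, hu⟩ := hpos'
        rcases hbip hu with h1 | h1
        · exfalso
          have : p ∈ D' ∩ P' := ⟨h1.1, hp⟩
          rw [hinter] at this; exact this
        · exact ⟨u, h1.2, hu.symm⟩
      have hsub : hfinP.toFinset ⊆ hfinD.toFinset.biUnion
          (fun d => (Set.toFinite (H'.neighborSet d)).toFinset) := by
        intro p hp
        rw [Set.Finite.mem_toFinset] at hp
        obtain ⟨d, hd, hpd⟩ := hcov p hp
        rw [Finset.mem_biUnion]
        exact ⟨d, by rwa [Set.Finite.mem_toFinset], by rwa [Set.Finite.mem_toFinset]⟩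
      have hPle : P'.ncard ≤ x * k := by
        have h1 := Finset.card_le_card hsub
        have h2 := Finset.card_biUnion_le (s := hfinD.toFinset)
          (t := fun d => (Set.toFinite (H'.neighborSet d)).toFinset)
        have h3 : ∀ d ∈ hfinD.toFinset, (Set.toFinite (H'.neighborSet d)).toFinset.card = k := by
          intro d hd
          rw [Set.Finite.mem_toFinset] at hd
          have hdd : (H'.neighborSet d).ncard = min k (n - 1) := by
            have h0 := hdeg d hd
            rw [top_nbr_ncard] at h0
            exact h0
          rw [← Set.ncard_eq_toFinset_card _ (Set.toFinite _), hdd]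
          omega
        have h4 : ∑ d ∈ hfinD.toFinset, (Set.toFinite (H'.neighborSet d)).toFinset.card
            = hfinD.toFinset.card * k := by
          rw [Finset.sum_congr rfl h3, Finset.sum_const, smul_eq_mul]
        have h5 : hfinD.toFinset.card = x := by
          rw [← Set.ncard_eq_toFinset_card _ hfinD, hcard]
        calc P'.ncard = hfinP.toFinset.card := Set.ncard_eq_toFinset_card _ hfinP
          _ ≤ _ := h1
          _ ≤ _ := h2
          _ = x * k := by rw [h4, h5]
      have hsum : D'.ncard + P'.ncard = n := by
        rw [← Set.ncard_union_eq (Set.disjoint_iff_inter_eq_empty.mpr hinter)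
          hfinD hfinP, hunion, Set.ncard_univ]
        simp
      have hnle : n ≤ x + x * k := by omega
      rw [← hm, Nat.div_le_iff_le_mul_add_pred (by omega), Nat.add_sub_cancel]
      have hxx : (k + 1) * x = x + x * k := by ring
      linarith
    exact le_antisymm (Nat.sInf_le hmem) (le_csInf ⟨m, hmem⟩ hlb)
end
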